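/- arXiv:1408.3204 — 3 statements merged into one kernel-verified Lean document; each statement's English description precedes it below -/
import Mathlib

section
/- For every graph G and every edge e of G, mp(G−e) ≥ mp(G)/3. -/
open SimpleGraph

/-- `mp G` is the maximum number of vertices of a degree monotone path in `G`. -/
noncomputable def mp {V : Type*} [Fintype V] (G : SimpleGraph V) : ℕ :=
  letI : DecidableEq V := Classical.decEq _
  letI : DecidableRel G.Adj := Classical.decRel _
  sSup {n : ℕ | ∃ (u v : V) (p : G.Walk u v), p.IsPath ∧
    (List.Chain' (· ≤ ·) (p.support.map (fun x => G.degree x)) ∨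
     List.Chain' (· ≥ ·) (p.support.map (fun x => G.degree x))) ∧ p.support.length = n}

/-!
Deleting `uv` lowers the degrees of `u` and `v` by one and leaves all other degrees unchanged.
Cut a longest degree monotone path of `G`, oriented so that its degrees do not decrease, just
before `u` and just before `v`. In each of the at most three pieces, `u` and `v` can only be the
first vertex, so the piece does not use the edge `uv`, and its degrees in `G - uv` still do not
decrease, only the first one having possibly dropped. Hence every piece has at most `mp (G - uv)`
vertices.
-/

namespace List

theorem length_le_mul_countP_tail_add_one {α : Type*} (p : α → Bool) {m : ℕ} {L : List α}
    (h : ∀ l, l <:+: L → (∀ x ∈ l.tail, ¬ p x) → l.length ≤ m) :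
    L.length ≤ m * (L.tail.countP p + 1) := by
  induction hn : L.length using Nat.strong_induction_on generalizing L with
  | _ n ih =>
  subst hn
  obtain _ | ⟨x, t⟩ := L
  · simp
  -- `x :: A` is the first piece; the rest starts with an entry satisfying `p`.
  set A := t.takeWhile (fun z => !p z)
  have htA : t = A ++ t.dropWhile (fun z => !p z) := takeWhile_append_dropWhile.symm
  have hA : ∀ z ∈ A, ¬ p z := fun z hz => by simpa using mem_takeWhile_imp hz
  rcases hR : t.dropWhile (fun z => !p z) with _ | ⟨y, r⟩
  · rw [hR, append_nil] at htA
    have hwhole := h (x :: t) (infix_refl _) (by simpa [← htA] using hA)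
    simp only [tail_cons, length_cons] at hwhole ⊢
    nlinarith
  · have hy : p y := by
      simpa [hR] using head_dropWhile_not (fun z => !p z) (l := t) (by simp [hR])
    rw [hR] at htA
    have hsuffix : y :: r <:+ x :: t := by
      rw [htA]; exact (suffix_append _ _).trans (suffix_cons _ _)
    have hfirst := h (x :: A) (by rw [htA]; exact (prefix_append (x :: A) _).isInfix)
      (by simpa using hA)
    have hrest := ih (y :: r).length (by simp [htA])
      (fun l hl => h l (hl.trans hsuffix.isInfix)) rfl
    have hcount : t.countP p = r.countP p + 1 := by
      rw [htA, countP_append, countP_eq_zero.2 (by simpa using hA), countP_cons_of_pos hy]; simp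
    simp only [tail_cons, length_cons, hcount] at hfirst hrest ⊢
    rw [htA, length_append, length_cons]
    nlinarith

theorem Nodup.countP_mem_le_length {α : Type*} [DecidableEq α] {L : List α} (hL : L.Nodup)
    (s : List α) : L.countP (· ∈ s) ≤ s.length := by
  rw [countP_eq_length_filter]
  exact (subperm_of_subset (hL.filter _) fun z hz => by simpa using (mem_filter.1 hz).2).length_le

end List

namespace SimpleGraph

variable {V : Type*}

theorem neighborSet_deleteEdges_singleton_of_notMem {G : SimpleGraph V} {e : Sym2 V} {x : V}
    (hx : x ∉ e) : (G.deleteEdges {e}).neighborSet x = G.neighborSet x := by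
  ext y
  simp only [mem_neighborSet, deleteEdges_adj, Set.mem_singleton_iff, and_iff_left_iff_imp]
  rintro - rfl
  exact hx (Sym2.mem_mk_left x y)

theorem degree_deleteEdges_singleton_of_notMem {G : SimpleGraph V} {e : Sym2 V} {x : V}
    [Fintype (G.neighborSet x)] [Fintype ((G.deleteEdges {e}).neighborSet x)] (hx : x ∉ e) :
    (G.deleteEdges {e}).degree x = G.degree x := by
  simp only [← card_neighborSet_eq_degree]
  exact Fintype.card_congr' (congrArg _ (neighborSet_deleteEdges_singleton_of_notMem hx))

variable [Fintype V]

def degreeMonotonePathLengths (G : SimpleGraph V) : Set ℕ :=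
  letI : DecidableEq V := Classical.decEq _
  letI : DecidableRel G.Adj := Classical.decRel _
  {n : ℕ | ∃ (u v : V) (p : G.Walk u v), p.IsPath ∧
    ((p.support.map (fun x => G.degree x)).IsChain (· ≤ ·) ∨
      (p.support.map (fun x => G.degree x)).IsChain (· ≥ ·)) ∧ p.support.length = n}

theorem mp_eq_sSup (G : SimpleGraph V) : mp G = sSup G.degreeMonotonePathLengths := rfl

theorem bddAbove_degreeMonotonePathLengths (G : SimpleGraph V) :
    BddAbove G.degreeMonotonePathLengths := by
  refine ⟨Fintype.card V, ?_⟩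
  rintro _ ⟨_, _, p, hp, -, rfl⟩
  exact hp.support_nodup.length_le_card

theorem length_support_le_mp {G : SimpleGraph V} [DecidableRel G.Adj] {x y : V} {p : G.Walk x y}
    (hp : p.IsPath) (hmono : (p.support.map (fun x => G.degree x)).IsChain (· ≤ ·) ∨
      (p.support.map (fun x => G.degree x)).IsChain (· ≥ ·)) :
    p.support.length ≤ mp G :=
  G.mp_eq_sSup ▸
    le_csSup G.bddAbove_degreeMonotonePathLengths ⟨x, y, p, hp, by convert hmono, rfl⟩

theorem exists_isPath_length_support_eq_mp [Nonempty V] (G : SimpleGraph V)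
    [DecidableRel G.Adj] :
    ∃ (x y : V) (p : G.Walk x y), p.IsPath ∧
      (p.support.map (fun x => G.degree x)).IsChain (· ≤ ·) ∧ p.support.length = mp G := by
  obtain ⟨x, y, p, hp, hmono, hlen⟩ : mp G ∈ G.degreeMonotonePathLengths := by
    rw [mp_eq_sSup]
    refine Nat.sSup_mem ?_ G.bddAbove_degreeMonotonePathLengths
    inhabit V
    exact ⟨1, default, default, .nil, .nil, Or.inl (by simp), rfl⟩
  obtain hle | hge : (p.support.map (fun x => G.degree x)).IsChain (· ≤ ·) ∨
      (p.support.map (fun x => G.degree x)).IsChain (· ≥ ·) := by convert hmono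
  · exact ⟨x, y, p, hp, hle, hlen⟩
  · refine ⟨y, x, p.reverse, hp.reverse, ?_, by simpa using hlen⟩
    rwa [Walk.support_reverse, List.map_reverse, List.isChain_reverse]

theorem length_le_mp_of_le {G H : SimpleGraph V} [DecidableRel G.Adj] [DecidableRel H.Adj]
    (hHG : H ≤ G) {l : List V} (hadj : l.IsChain H.Adj) (hnodup : l.Nodup)
    (hmono : (l.map (fun x => G.degree x)).IsChain (· ≤ ·))
    (hdeg : ∀ x ∈ l.tail, H.degree x = G.degree x) :
    l.length ≤ mp H := by
  obtain rfl | hne := eq_or_ne l []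
  · exact Nat.zero_le _
  have hmono' : (l.map (fun x => H.degree x)).IsChain (· ≤ ·) := by
    rw [List.isChain_map] at hmono ⊢
    refine hmono.imp_of_mem_tail_imp fun a b _ hb hab => ?_
    calc H.degree a ≤ G.degree a := degree_le_of_le hHG
      _ ≤ G.degree b := hab
      _ = H.degree b := (hdeg b hb).symm
  have hp : (Walk.ofSupport l hne hadj).IsPath := .mk' (by simpa using hnodup)
  simpa using length_support_le_mp hp (.inl (by simpa using hmono'))

theorem length_le_mp_deleteEdges_singleton {G : SimpleGraph V} [DecidableRel G.Adj]
    {e : Sym2 V} {l : List V} (hadj : l.IsChain G.Adj) (hnodup : l.Nodup)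
    (hmono : (l.map (fun x => G.degree x)).IsChain (· ≤ ·))
    (htail : ∀ x ∈ l.tail, x ∉ e) : l.length ≤ mp (G.deleteEdges {e}) := by
  classical
  refine length_le_mp_of_le (deleteEdges_le _) ?_ hnodup hmono
    fun x hx => degree_deleteEdges_singleton_of_notMem (htail x hx)
  refine hadj.imp_of_mem_tail_imp fun a b _ hb hab => deleteEdges_adj.2 ⟨hab, ?_⟩
  rintro rfl
  exact htail b hb (Sym2.mem_mk_right a b)

theorem mp_le_three_mul_mp_deleteEdges (G : SimpleGraph V) (u v : V) :
    mp G ≤ 3 * mp (G.deleteEdges {s(u, v)}) := by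
  classical
  have : Nonempty V := ⟨u⟩
  obtain ⟨x, y, p, hp, hmono, hlen⟩ := G.exists_isPath_length_support_eq_mp
  have hpieces := List.length_le_mul_countP_tail_add_one (· ∈ [u, v]) (L := p.support)
    fun l hl htail => length_le_mp_deleteEdges_singleton (e := s(u, v))
      (p.isChain_adj_support.infix hl)
      (hp.support_nodup.sublist hl.sublist) (hmono.infix (hl.map _)) (by simpa using htail)
  have hcount := (hp.support_nodup.sublist (List.tail_sublist _)).countP_mem_le_length [u, v]
  rw [← hlen]
  simp only [List.length_cons, List.length_nil] at hcount
  nlinarith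

end SimpleGraph

theorem mp_delete_edge_ge_general {V : Type*} [Fintype V] (G : SimpleGraph V) (u v : V) :
    (mp G : ℚ) / 3 ≤ (mp (G.deleteEdges {s(u, v)}) : ℚ) := by
  rw [div_le_iff₀ three_pos]
  exact_mod_cast (G.mp_le_three_mul_mp_deleteEdges u v).trans_eq (mul_comm _ _)

theorem mp_delete_edge_ge {V : Type*} [Fintype V] (G : SimpleGraph V) (u v : V)
    (he : G.Adj u v) :
    (mp G : ℚ) / 3 ≤ (mp (G.deleteEdges {s(u, v)}) : ℚ) :=
  mp_delete_edge_ge_general G u v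
end

section
/- For every k ≥ 2 there exists a graph G with mp(G) = k and a non-edge e of G such that mp(G+e) = 3k, i.e., the upper bound mp(G+e) ≤ 3·mp(G) is sharp. -/
/-!
Let `G` be the caterpillar on the spine `0 — 1 — ⋯ — 3k` with a pendant leaf `4k + a` at every
spine vertex `a ∈ {k - 1} ∪ (k, 2k) ∪ (2k, 3k)`; the other vertices of `Fin (7k)` are isolated.
Along the spine the degrees read `1, 2, …, 2, 3 | 2, 3, …, 3 | 2, 3, …, 3, 1`, the blocks
starting at `0`, `k` and `2k`. Adding the edge `k — 2k` raises the two `2`s at `k` and `2k`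
to `3`, and `0, …, 3k - 1` becomes a degree monotone path with `3k` vertices.

For the upper bounds, reverse a path so that its degrees are nondecreasing. A vertex of degree
at most `1` can be neither an interior vertex nor, once the path has three vertices, the last
one; so all vertices but the first lie on the core `1, …, 3k - 1`, which gives `3k` for `G + e`.
In `G` every neighbour of `k` or `2k` has larger degree, so these two can only come first. The
rest of the path is then a walk with steps `±1` avoiding all multiples of `k`: it stays between
two consecutive multiples of `k` and has at most `k - 1` vertices.
-/

open SimpleGraph

open Finset

lemma List.Nodup.length_le_of_isChain_of_not_dvd {k : ℕ} (hk : 0 < k) {l : List ℕ}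
    (hnd : l.Nodup) (hstep : l.IsChain fun x y => y = x + 1 ∨ x = y + 1)
    (hdvd : ∀ x ∈ l, ¬ k ∣ x) : l.length ≤ k - 1 := by
  cases l with
  | nil => simp
  | cons a t =>
    have hquot : ((a :: t).map (· / k)).IsChain (· = ·) := by
      refine List.isChain_map _ |>.mpr <| hstep.imp_of_mem_imp fun x y hx hy hxy => ?_
      rcases hxy with rfl | rfl
      · exact (Nat.succ_div_of_not_dvd (hdvd _ hy)).symm
      · exact Nat.succ_div_of_not_dvd (hdvd _ hx)
    have hsub : (a :: t).toFinset ⊆ Ioo (a / k * k) (a / k * k + k) := by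
      intro x hx
      rw [List.mem_toFinset] at hx
      have hrep := List.isChain_eq_iff_eq_replicate.mp hquot (a / k) (by simp)
      have hxa : x / k = a / k :=
        List.eq_of_mem_replicate (hrep ▸ List.mem_map_of_mem (f := (· / k)) hx)
      have hx0 : 0 < x % k := Nat.pos_of_ne_zero fun h => hdvd x hx (Nat.dvd_of_mod_eq_zero h)
      have := Nat.div_add_mod x k
      have := Nat.mod_lt x hk
      rw [mem_Ioo, ← hxa, Nat.mul_comm]
      constructor <;> linarith
    have := card_le_card hsub
    rw [List.toFinset_card_of_nodup hnd, Nat.card_Ioo] at this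
    omega

namespace SimpleGraph

variable {V : Type*} {G : SimpleGraph V}

lemma two_le_degree_of_adj_of_adj {u v w : V} [Fintype (G.neighborSet v)]
    (hu : G.Adj v u) (hw : G.Adj v w) (huw : u ≠ w) : 2 ≤ G.degree v := by
  classical
  rw [← card_neighborFinset_eq_degree, ← card_pair huw]
  exact card_le_card (by simp [insert_subset_iff, hu, hw])

section LocallyFinite

variable [G.LocallyFinite]

lemma two_le_degree_of_mem_tail {l : List V} (hadj : l.IsChain G.Adj) (hnd : l.Nodup)
    (hmono : (l.map fun x => G.degree x).IsChain (· ≤ ·)) (hlen : 3 ≤ l.length) :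
    ∀ v ∈ l.tail, 2 ≤ G.degree v := by
  match l, hlen with
  | a :: b :: c :: rest, _ =>
    simp only [List.isChain_cons_cons, List.map_cons] at hadj hmono
    have hb : 2 ≤ G.degree b :=
      two_le_degree_of_adj_of_adj hadj.1.symm hadj.2.1 (by grind)
    intro v hv
    rcases List.mem_cons.mp hv with rfl | hv
    · exact hb
    cases rest with
    | nil => grind
    | cons d rest =>
      exact two_le_degree_of_mem_tail (List.isChain_cons_cons.mpr hadj.2) hnd.of_cons
        (by simpa [List.isChain_cons_cons] using hmono.2) (by simp) v hv

lemma notMem_tail_of_forall_adj_degree_lt {l : List V} (hadj : l.IsChain G.Adj)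
    (hmono : (l.map fun x => G.degree x).IsChain (· ≤ ·)) {v : V}
    (hv : ∀ w, G.Adj v w → G.degree v < G.degree w) : v ∉ l.tail := by
  match l with
  | [] | [_] => simp
  | a :: b :: rest =>
    simp only [List.isChain_cons_cons, List.map_cons] at hadj hmono
    intro hmem
    rcases List.mem_cons.mp hmem with rfl | hmem
    · exact (hv a hadj.1.symm).not_ge hmono.1
    · exact notMem_tail_of_forall_adj_degree_lt hadj.2 hmono.2 hv hmem

end LocallyFinite

lemma degree_sup_edge_of_ne [Fintype V] [DecidableEq V] [DecidableRel G.Adj] {u v w : V}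
    (hu : w ≠ u) (hv : w ≠ v) : (G ⊔ edge u v).degree w = G.degree w := by
  simp only [← card_neighborFinset_eq_degree]
  congr 1
  ext x
  simp [edge_adj, hu, hv]

lemma degree_sup_edge_left [Fintype V] [DecidableEq V] [DecidableRel G.Adj] {u v : V}
    (huv : u ≠ v) (h : ¬ G.Adj u v) : (G ⊔ edge u v).degree u = G.degree u + 1 := by
  simp only [← card_neighborFinset_eq_degree]
  rw [← card_insert_of_notMem (s := G.neighborFinset u) (a := v) (by simpa using h)]
  congr 1
  ext x
  simp only [mem_neighborFinset, sup_adj, edge_adj, mem_insert]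
  grind [G.ne_of_adj]

lemma degree_sup_edge_right [Fintype V] [DecidableEq V] [DecidableRel G.Adj] {u v : V}
    (huv : u ≠ v) (h : ¬ G.Adj u v) : (G ⊔ edge u v).degree v = G.degree v + 1 := by
  convert degree_sup_edge_left huv.symm (G := G) (fun h' => h h'.symm) using 3
  exact edge_comm u v

lemma degree_eq_card_of_adj_iff {n : ℕ} {G : SimpleGraph (Fin n)} [DecidableRel G.Adj]
    (x : Fin n) (s : Finset ℕ) (hs : ∀ b ∈ s, b < n) (h : ∀ y : Fin n, G.Adj x y ↔ (y : ℕ) ∈ s) :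
    G.degree x = #s := by
  rw [← card_neighborFinset_eq_degree, ← card_map Fin.valEmbedding]
  congr 1
  ext b
  simp only [mem_map, mem_neighborFinset, h, Fin.valEmbedding_apply]
  exact ⟨fun ⟨y, hy, hyb⟩ => hyb ▸ hy, fun hb => ⟨⟨b, hs b hb⟩, hb, rfl⟩⟩

variable [Fintype V] [DecidableRel G.Adj]

set_option linter.deprecated false in
theorem mp_eq_of_forall_le_of_exists {m : ℕ}
    (hle : ∀ (u v : V) (p : G.Walk u v), p.IsPath →
      (p.support.map fun x => G.degree x).IsChain (· ≤ ·) → p.support.length ≤ m)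
    (hex : ∃ (u v : V) (p : G.Walk u v), p.IsPath ∧
      (p.support.map fun x => G.degree x).IsChain (· ≤ ·) ∧ p.support.length = m) :
    mp G = m := by
  have hS : IsGreatest {n : ℕ | ∃ (u v : V) (p : G.Walk u v), p.IsPath ∧
      ((p.support.map fun x => G.degree x).IsChain (· ≤ ·) ∨
        (p.support.map fun x => G.degree x).IsChain (· ≥ ·)) ∧ p.support.length = n} m := by
    refine ⟨?_, ?_⟩
    · obtain ⟨u, v, p, hp, hmono, hlen⟩ := hex
      exact ⟨u, v, p, hp, Or.inl hmono, hlen⟩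
    · rintro n ⟨u, v, p, hp, hmono | hanti, rfl⟩
      · exact hle u v p hp hmono
      · simpa using hle v u p.reverse (by simpa using hp)
          (by simpa [List.isChain_reverse] using hanti)
  unfold mp List.Chain'
  -- `convert` trades the classical instances inside `mp` for the given ones
  convert hS.csSup_eq
  rfl

theorem exists_isPath_of_adj_succ {n m : ℕ} {G : SimpleGraph (Fin n)} [DecidableRel G.Adj]
    (hm : 0 < m) (hmn : m ≤ n)
    (hadj : ∀ i j : Fin n, (j : ℕ) = i + 1 → (j : ℕ) < m → G.Adj i j)
    (hdeg : ∀ i j : Fin n, (j : ℕ) = i + 1 → (j : ℕ) < m → G.degree i ≤ G.degree j) :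
    ∃ (u v : Fin n) (p : G.Walk u v), p.IsPath ∧
      (p.support.map fun x => G.degree x).IsChain (· ≤ ·) ∧ p.support.length = m := by
  set l := (List.finRange n).take m
  have hl : ∀ i (hi : i < l.length), (l[i] : ℕ) = i := by simp [l]
  have hlen : l.length = m := by simp [l, hmn]
  have hchain : l.IsChain fun i j : Fin n => (j : ℕ) = i + 1 ∧ (j : ℕ) < m := by
    rw [List.isChain_iff_getElem]
    intro i hi
    simp only [hl, true_and]
    omega
  refine ⟨_, _, Walk.ofSupport l (by simp [← List.length_pos_iff, hlen, hm])
    (hchain.imp fun i j h => hadj i j h.1 h.2), ?_, ?_, by simp [hlen]⟩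
  · rw [Walk.isPath_def, Walk.support_ofSupport]
    exact (List.nodup_finRange n).sublist (List.take_sublist _ _)
  · rw [Walk.support_ofSupport, List.isChain_map]
    exact hchain.imp fun i j h => hdeg i j h.1 h.2

end SimpleGraph

def HasLeaf (k a : ℕ) : Prop := a + 1 = k ∨ (k < a ∧ a < 3 * k ∧ a ≠ 2 * k)

instance (k : ℕ) : DecidablePred (HasLeaf k) := fun _ => by unfold HasLeaf; infer_instance

def caterpillar (k : ℕ) : SimpleGraph (Fin (7 * k)) :=
  fromRel fun x y => ((y : ℕ) = x + 1 ∧ (y : ℕ) ≤ 3 * k) ∨ ((y : ℕ) = x + 4 * k ∧ HasLeaf k x)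

instance (k : ℕ) : DecidableRel (caterpillar k).Adj := by unfold caterpillar; infer_instance

def caterpillarDegree (k a : ℕ) : ℕ :=
  if 0 < a ∧ a < 3 * k then (if HasLeaf k a then 3 else 2)
  else if a = 0 ∨ a = 3 * k ∨ (4 * k ≤ a ∧ HasLeaf k (a - 4 * k)) then 1 else 0

section caterpillar

variable {k : ℕ}

lemma caterpillar_adj (x y : Fin (7 * k)) : (caterpillar k).Adj x y ↔ (x : ℕ) ≠ y ∧
    (((y : ℕ) = x + 1 ∧ (y : ℕ) ≤ 3 * k) ∨ ((y : ℕ) = x + 4 * k ∧ HasLeaf k x) ∨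
      ((x : ℕ) = y + 1 ∧ (x : ℕ) ≤ 3 * k) ∨ ((x : ℕ) = y + 4 * k ∧ HasLeaf k y)) := by
  simp only [caterpillar, fromRel_adj, ne_eq, Fin.ext_iff, or_assoc]

lemma degree_caterpillar (hk : 2 ≤ k) (x : Fin (7 * k)) :
    (caterpillar k).degree x = caterpillarDegree k x := by
  obtain ⟨a, ha⟩ := x
  obtain h | h | h | h | h | h : a = 0 ∨ a = 3 * k ∨ (0 < a ∧ a < 3 * k ∧ HasLeaf k a) ∨
      (0 < a ∧ a < 3 * k ∧ ¬ HasLeaf k a) ∨ (4 * k ≤ a ∧ HasLeaf k (a - 4 * k)) ∨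
      (3 * k < a ∧ ¬ (4 * k ≤ a ∧ HasLeaf k (a - 4 * k))) := by
    unfold HasLeaf; omega
  · rw [degree_eq_card_of_adj_iff _ {1} (by simp; omega)
      (fun y => by simp only [caterpillar_adj, HasLeaf, mem_singleton]; omega)]
    simp [caterpillarDegree, h]
  · rw [degree_eq_card_of_adj_iff _ {3 * k - 1} (by simp; omega)
      (fun y => by simp only [caterpillar_adj, HasLeaf, mem_singleton]; omega)]
    simp [caterpillarDegree, h]
  · rw [degree_eq_card_of_adj_iff _ {a - 1, a + 1, a + 4 * k} (by simp; omega)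
      (fun y => by simp only [caterpillar_adj, HasLeaf, mem_insert, mem_singleton] at h ⊢; omega),
      card_insert_of_notMem (by simp; omega), card_pair (by omega)]
    simp [caterpillarDegree, h]
  · rw [degree_eq_card_of_adj_iff _ {a - 1, a + 1} (by simp; omega)
      (fun y => by simp only [caterpillar_adj, HasLeaf, mem_insert, mem_singleton] at h ⊢; omega),
      card_pair (by omega)]
    simp [caterpillarDegree, h]
  · rw [degree_eq_card_of_adj_iff _ {a - 4 * k} (by simp; omega)
      (fun y => by simp only [caterpillar_adj, HasLeaf, mem_singleton] at h ⊢; omega),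
      card_singleton, caterpillarDegree]
    split_ifs <;> simp only [HasLeaf] at * <;> omega
  · rw [degree_eq_card_of_adj_iff _ ∅ (by simp)
      (fun y => by simp only [caterpillar_adj, HasLeaf, notMem_empty, iff_false] at h ⊢; omega),
      card_empty, caterpillarDegree]
    split_ifs <;> simp only [HasLeaf] at * <;> omega

lemma caterpillar_core_of_two_le_degree (hk : 2 ≤ k) {x : Fin (7 * k)}
    (h : 2 ≤ (caterpillar k).degree x) : 0 < (x : ℕ) ∧ (x : ℕ) < 3 * k := by
  rw [degree_caterpillar hk, caterpillarDegree] at h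
  split_ifs at h <;> omega

lemma caterpillar_succ_or_pred_of_adj {x y : Fin (7 * k)} (hx : (x : ℕ) < 3 * k)
    (hy : (y : ℕ) < 3 * k) (h : (caterpillar k).Adj x y) : (y : ℕ) = x + 1 ∨ (x : ℕ) = y + 1 := by
  rw [caterpillar_adj] at h
  omega

lemma degree_caterpillar_lt_of_adj (hk : 2 ≤ k) {x y : Fin (7 * k)}
    (hx : (x : ℕ) = k ∨ (x : ℕ) = 2 * k) (h : (caterpillar k).Adj x y) :
    (caterpillar k).degree x < (caterpillar k).degree y := by
  rw [caterpillar_adj] at h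
  rw [degree_caterpillar hk, degree_caterpillar hk, caterpillarDegree, caterpillarDegree]
  split_ifs <;> simp only [HasLeaf] at * <;> omega

lemma length_support_le_of_caterpillar (hk : 2 ≤ k) {u v : Fin (7 * k)}
    (p : (caterpillar k).Walk u v) (hp : p.IsPath)
    (hmono : (p.support.map fun x => (caterpillar k).degree x).IsChain (· ≤ ·)) :
    p.support.length ≤ k := by
  by_cases hlen : p.support.length ≤ 2
  · omega
  have hcore : ∀ x ∈ p.support.tail, 0 < (x : ℕ) ∧ (x : ℕ) < 3 * k := fun x hx =>
    caterpillar_core_of_two_le_degree hk <| two_le_degree_of_mem_tail p.isChain_adj_support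
      hp.support_nodup hmono (by omega) x hx
  have hnotdvd : ∀ x ∈ p.support.tail, ¬ k ∣ (x : ℕ) := by
    intro x hx ⟨c, hc⟩
    obtain ⟨hpos, hlt⟩ := hcore x hx
    have hc3 : c < 3 := by nlinarith
    have hmin : (x : ℕ) = k ∨ (x : ℕ) = 2 * k := by interval_cases c <;> omega
    exact notMem_tail_of_forall_adj_degree_lt p.isChain_adj_support hmono
      (fun _ => degree_caterpillar_lt_of_adj hk hmin) hx
  have hnd := (hp.support_nodup.sublist (List.tail_sublist _)).map Fin.val_injective
  have := hnd.length_le_of_isChain_of_not_dvd (k := k) (by omega)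
    (List.isChain_map _ |>.mpr <| p.isChain_adj_support.tail.imp_of_mem_imp
      fun x y hx hy => caterpillar_succ_or_pred_of_adj (hcore x hx).2 (hcore y hy).2)
    (fun _ hn => by obtain ⟨x, hx, rfl⟩ := List.mem_map.mp hn; exact hnotdvd x hx)
  simp only [List.length_map, List.length_tail] at this
  omega

lemma mp_caterpillar (hk : 2 ≤ k) : mp (caterpillar k) = k :=
  mp_eq_of_forall_le_of_exists
    (fun _ _ p hp hmono => length_support_le_of_caterpillar hk p hp hmono)
    (exists_isPath_of_adj_succ (by omega) (by omega)
      (fun i j hij hj => by rw [caterpillar_adj]; omega)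
      (fun i j hij hj => by
        rw [degree_caterpillar hk, degree_caterpillar hk, caterpillarDegree, caterpillarDegree]
        split_ifs <;> simp only [HasLeaf] at * <;> omega))

variable {u v : Fin (7 * k)}

lemma degree_caterpillar_sup_edge (hk : 2 ≤ k) (hu : (u : ℕ) = k) (hv : (v : ℕ) = 2 * k)
    (x : Fin (7 * k)) : (caterpillar k ⊔ edge u v).degree x =
      caterpillarDegree k x + if (x : ℕ) = k ∨ (x : ℕ) = 2 * k then 1 else 0 := by
  have huv : u ≠ v := by rw [ne_eq, Fin.ext_iff]; omega
  have hnadj : ¬ (caterpillar k).Adj u v := by rw [caterpillar_adj]; omega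
  by_cases hxu : x = u
  · subst hxu
    rw [degree_sup_edge_left huv hnadj, degree_caterpillar hk, if_pos (.inl hu)]
  by_cases hxv : x = v
  · subst hxv
    rw [degree_sup_edge_right huv hnadj, degree_caterpillar hk, if_pos (.inr hv)]
  rw [degree_sup_edge_of_ne hxu hxv, degree_caterpillar hk, if_neg (by
    simp only [Fin.ext_iff] at hxu hxv; omega), add_zero]

lemma length_support_le_of_caterpillar_sup_edge (hk : 2 ≤ k) (hu : (u : ℕ) = k)
    (hv : (v : ℕ) = 2 * k) {a b : Fin (7 * k)} (p : (caterpillar k ⊔ edge u v).Walk a b)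
    (hp : p.IsPath)
    (hmono : (p.support.map fun x => (caterpillar k ⊔ edge u v).degree x).IsChain (· ≤ ·)) :
    p.support.length ≤ 3 * k := by
  by_cases hlen : p.support.length ≤ 2
  · omega
  have hcore : (p.support.tail.map Fin.val).toFinset ⊆ Ico 1 (3 * k) := by
    intro n hn
    obtain ⟨x, hx, rfl⟩ := List.mem_map.mp (List.mem_toFinset.mp hn)
    have h2 := two_le_degree_of_mem_tail p.isChain_adj_support hp.support_nodup hmono
      (by omega) x hx
    rw [degree_caterpillar_sup_edge hk hu hv, caterpillarDegree] at h2
    rw [mem_Ico]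
    split_ifs at h2 <;> omega
  have hnd := (hp.support_nodup.sublist (List.tail_sublist _)).map Fin.val_injective
  have := card_le_card hcore
  rw [List.toFinset_card_of_nodup hnd, Nat.card_Ico, List.length_map, List.length_tail] at this
  omega

lemma mp_caterpillar_sup_edge (hk : 2 ≤ k) (hu : (u : ℕ) = k) (hv : (v : ℕ) = 2 * k) :
    mp (caterpillar k ⊔ edge u v) = 3 * k :=
  mp_eq_of_forall_le_of_exists
    (fun _ _ p hp hmono => length_support_le_of_caterpillar_sup_edge hk hu hv p hp hmono)
    (exists_isPath_of_adj_succ (by omega) (by omega)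
      (fun i j hij hj => Or.inl <| by rw [caterpillar_adj]; omega)
      (fun i j hij hj => by
        rw [degree_caterpillar_sup_edge hk hu hv, degree_caterpillar_sup_edge hk hu hv,
          caterpillarDegree, caterpillarDegree]
        split_ifs <;> simp only [HasLeaf] at * <;> omega))

end caterpillar

theorem mp_add_edge_sharp (k : ℕ) (hk : 2 ≤ k) :
    ∃ (n : ℕ) (G : SimpleGraph (Fin n)) (u v : Fin n),
      u ≠ v ∧ ¬ G.Adj u v ∧ mp G = k ∧
      mp (G ⊔ fromEdgeSet {s(u, v)}) = 3 * k := by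
  exact ⟨7 * k, caterpillar k, ⟨k, by omega⟩, ⟨2 * k, by omega⟩, by simp [Fin.ext_iff]; omega,
    by rw [caterpillar_adj]; simp only [HasLeaf]; omega, mp_caterpillar hk,
    mp_caterpillar_sup_edge hk rfl rfl⟩
end

section
/- Let G be a graph, e = (u,v) an edge of G, and G* the graph obtained from G by subdividing e with a new vertex w. Then mp(G*) ≤ mp(G) + 1. -/
/-!
Deleting the subdivision vertex from a degree monotone path of the subdivided graph leaves a
sequence of vertices of `G`. Consecutive ones are still adjacent in `G`: the only new adjacencies
run through the subdivision vertex, whose two path neighbours must be `u` and `v`. The degrees of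
the old vertices are unchanged, and a subsequence of a monotone sequence is monotone, so the
remaining sequence is a degree monotone path of `G` with at most one vertex fewer.
-/

open SimpleGraph

/-- The graph obtained from `G` by subdividing the edge `uv` with a new vertex `none`. -/
def subdivide {V : Type*} (G : SimpleGraph V) (u v : V) : SimpleGraph (Option V) :=
  SimpleGraph.fromRel (fun a b =>
    (∃ x y, a = some x ∧ b = some y ∧ G.Adj x y ∧ ¬(x = u ∧ y = v) ∧ ¬(x = v ∧ y = u)) ∨
    (a = none ∧ (b = some u ∨ b = some v)))

namespace List

variable {α : Type*}

theorem map_some_reduceOption_sublist : ∀ l : List (Option α), l.reduceOption.map some <+ l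
  | [] => Sublist.slnil
  | none :: l => (map_some_reduceOption_sublist l).cons none
  | some a :: l => (map_some_reduceOption_sublist l).cons_cons (some a)

theorem reduceOption_map_some (l : List α) : (l.map some).reduceOption = l := by
  induction l <;> simp [*]

theorem map_some_reduceOption_of_none_notMem {l : List (Option α)} (h : none ∉ l) :
    l.reduceOption.map some = l :=
  (map_some_reduceOption_sublist l).eq_of_length <| by
    rw [length_map, reduceOption_length_eq_iff]
    intro x hx
    exact Option.isSome_iff_ne_none.mpr fun hx' => h (hx' ▸ hx)

theorem length_le_reduceOption_length_add_one {l : List (Option α)} (h : l.Nodup) :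
    l.length ≤ l.reduceOption.length + 1 := by
  have hnone : l.filter Option.isNone = replicate (l.filter Option.isNone).length none :=
    eq_replicate_iff.mpr ⟨rfl, fun x hx => Option.isNone_iff_eq_none.mp (of_mem_filter hx)⟩
  have hle := h.filter Option.isNone
  rw [hnone, nodup_replicate] at hle
  rw [length_eq_reduceOption_length_add_filter_none]
  omega

def IsMonotone {β : Type*} [Preorder β] (l : List β) : Prop :=
  l.IsChain (· ≤ ·) ∨ l.IsChain (· ≥ ·)

theorem IsMonotone.sublist {β : Type*} [Preorder β] {l₁ l₂ : List β} (h : l₂.IsMonotone)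
    (hl : l₁ <+ l₂) : l₁.IsMonotone :=
  h.imp (·.sublist hl) (·.sublist hl)

end List

namespace SimpleGraph

variable {V : Type*} {G : SimpleGraph V}

theorem length_le_mp [Fintype V] [DecidableRel G.Adj] {l : List V} (hl : l.IsChain G.Adj)
    (hnd : l.Nodup) (hmono : (l.map fun x => G.degree x).IsMonotone) : l.length ≤ mp G := by
  rcases eq_or_ne l [] with rfl | hne
  · exact Nat.zero_le _
  have hsupp := Walk.support_ofSupport hne hl
  refine le_csSup ⟨Fintype.card V, ?_⟩
    ⟨_, _, Walk.ofSupport l hne hl, (Walk.isPath_def _).mpr (by rwa [hsupp]), ?_, by rw [hsupp]⟩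
  · rintro n ⟨x, y, q, hq, -, rfl⟩
    exact q.length_support ▸ hq.length_lt
  · rw [hsupp]
    -- `mp` computes degrees with classical instances; `congr!` identifies them with ours.
    unfold List.IsMonotone at hmono
    convert hmono using 5 <;> congr!

theorem mp_le [Fintype V] [DecidableRel G.Adj] {m : ℕ}
    (h : ∀ l : List V, l.IsChain G.Adj → l.Nodup → (l.map fun x => G.degree x).IsMonotone →
      l.length ≤ m) :
    mp G ≤ m := by
  refine csSup_le' ?_
  rintro n ⟨a, b, p, hp, hmono, rfl⟩
  refine h _ p.isChain_adj_support hp.support_nodup ?_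
  unfold List.IsMonotone
  convert hmono using 5 <;> congr!

section Subdivide

variable {u v : V}

theorem subdivide_adj_some_some {x y : V} :
    (subdivide G u v).Adj (some x) (some y) ↔ G.Adj x y ∧ s(x, y) ≠ s(u, v) := by
  simp only [subdivide, fromRel_adj]
  grind [adj_symm, Adj.ne]

theorem subdivide_adj_none {a : Option V} :
    (subdivide G u v).Adj none a ↔ a = some u ∨ a = some v := by
  simp [subdivide]
  grind

theorem neighborFinset_subdivide_some [Fintype V] [DecidableEq V] [DecidableRel G.Adj]
    [DecidableRel (subdivide G u v).Adj] (he : G.Adj u v) (x : V) :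
    (subdivide G u v).neighborFinset (some x) =
      (G.neighborFinset x).image fun y => if s(x, y) = s(u, v) then none else some y := by
  ext (_ | y)
  · simp [adj_comm _ (some x), subdivide_adj_none]
    grind [adj_symm]
  · simp [subdivide_adj_some_some]

theorem degree_subdivide_some [Fintype V] [DecidableRel G.Adj]
    [DecidableRel (subdivide G u v).Adj] (he : G.Adj u v) (x : V) :
    (subdivide G u v).degree (some x) = G.degree x := by
  classical
  rw [← card_neighborFinset_eq_degree, ← card_neighborFinset_eq_degree,
    neighborFinset_subdivide_some he, Finset.card_image_of_injOn]
  intro y₁ _ y₂ _ h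
  dsimp only at h
  split_ifs at h with h₁ h₂ h₂
  · exact Sym2.congr_right.mp (h₁.trans h₂.symm)
  all_goals simp_all

theorem adj_of_subdivide_adj_none (he : G.Adj u v) {x y : V}
    (hx : (subdivide G u v).Adj (some x) none) (hy : (subdivide G u v).Adj none (some y))
    (hxy : x ≠ y) : G.Adj x y := by
  rw [adj_comm, subdivide_adj_none] at hx
  rw [subdivide_adj_none] at hy
  grind [adj_symm]

theorem isChain_of_isChain_subdivide_map_some {l : List V}
    (h : (l.map some).IsChain (subdivide G u v).Adj) : l.IsChain G.Adj :=
  ((List.isChain_map some).mp h).imp fun _ _ hxy => (subdivide_adj_some_some.mp hxy).1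

theorem isChain_reduceOption_of_isChain_subdivide (he : G.Adj u v) {l : List (Option V)}
    (hl : l.IsChain (subdivide G u v).Adj) (hnd : l.Nodup) : l.reduceOption.IsChain G.Adj := by
  by_cases hnone : none ∈ l
  swap
  · rw [← List.map_some_reduceOption_of_none_notMem hnone] at hl
    exact isChain_of_isChain_subdivide_map_some hl
  obtain ⟨s, t, rfl⟩ := List.append_of_mem hnone
  have hst : none ∉ s ∧ none ∉ t := by
    simpa using (List.nodup_middle.mp hnd).notMem
  obtain ⟨s', rfl⟩ : ∃ s' : List V, s = s'.map some :=
    ⟨_, (List.map_some_reduceOption_of_none_notMem hst.1).symm⟩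
  obtain ⟨t', rfl⟩ : ∃ t' : List V, t = t'.map some :=
    ⟨_, (List.map_some_reduceOption_of_none_notMem hst.2).symm⟩
  obtain ⟨hs, ht, hjoin⟩ := List.isChain_append.mp hl
  simp only [List.reduceOption_append, List.reduceOption_cons_of_none, List.reduceOption_map_some]
  refine List.isChain_append.mpr ⟨isChain_of_isChain_subdivide_map_some hs,
    isChain_of_isChain_subdivide_map_some ht.tail, fun x hx y hy => ?_⟩
  obtain ⟨t'', rfl⟩ := List.head?_eq_some_iff.mp hy
  refine adj_of_subdivide_adj_none he (hjoin (some x) (by simpa using hx) none rfl)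
    (List.isChain_cons_cons.mp ht).1 ?_
  rintro rfl
  have hxs : x ∈ s' := List.mem_of_getLast? hx
  simp only [List.nodup_append, List.mem_map] at hnd
  exact hnd.2.2 _ ⟨x, hxs, rfl⟩ (some x) (by simp) rfl

end Subdivide

end SimpleGraph

theorem mp_subdivide_le {V : Type*} [Fintype V] (G : SimpleGraph V) (u v : V)
    (he : G.Adj u v) :
    mp (subdivide G u v) ≤ mp G + 1 := by
  classical
  refine mp_le fun l hl hnd hmono => ?_
  have hsub := l.map_some_reduceOption_sublist
  have hdeg : l.reduceOption.map (fun x => G.degree x) =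
      (l.reduceOption.map some).map fun x => (subdivide G u v).degree x := by
    simp [List.map_map, Function.comp_def, degree_subdivide_some he]
  calc l.length ≤ l.reduceOption.length + 1 := List.length_le_reduceOption_length_add_one hnd
    _ ≤ mp G + 1 := by
      gcongr
      refine length_le_mp (isChain_reduceOption_of_isChain_subdivide he hl hnd)
        (List.Nodup.of_map some (hnd.sublist hsub)) ?_
      rw [hdeg]
      exact hmono.sublist (hsub.map _)
end
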